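/- arXiv:1809.02636 — 5 statements merged into one kernel-verified Lean document; each statement's English description precedes it below -/
import Mathlib

section
/- Let G be a finite simple graph and let u, v be adjacent vertices of G with no common neighbor and deg(u) = deg(v) = 2. Then either the connected component of u in G induces a chordless path or a chordless cycle, or G contains a chain all of whose vertices lie in the connected component of u. -/
/-!
If every vertex of the component of `u` has degree at most 2, a longest path in the component
visits all of its vertices: an unvisited neighbour would either extend the path at an end or give
an inner vertex a third neighbour. So the component is that path, closed into a cycle when its
ends are adjacent.

Otherwise take a vertex `x` of degree at least 3 nearest to `u` and a shortest path from `x` to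
`u`; every later vertex on it has degree 2. If the path has at least three edges, its first four
vertices form a chain. If it is shorter, the chain is completed along the edge `uv`, and since `u`
and `v` have no common neighbour its two ends are distinct.
-/

/-- A chain in a graph `H`: vertices `x, x₁, x₂, x₃` forming a path with
`x ≠ x₃`, `deg x ≥ 3` and `deg x₁ = deg x₂ = 2`. -/
def GraphChain {V : Type*} (H : SimpleGraph V) (x x1 x2 x3 : V) : Prop :=
  H.Adj x x1 ∧ H.Adj x1 x2 ∧ H.Adj x2 x3 ∧ x ≠ x3 ∧
    3 ≤ (H.neighborSet x).ncard ∧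
    (H.neighborSet x1).ncard = 2 ∧ (H.neighborSet x2).ncard = 2

lemma Fin.val_sub_eq_one_iff {n : ℕ} (hn : 0 < n) (i j : Fin (n + 1)) :
    (i - j).val = 1 ↔ i.val = j.val + 1 ∨ i.val = 0 ∧ j.val = n := by
  rcases le_or_gt j i with h | h
  · rw [Fin.coe_sub_iff_le.mpr h]
    omega
  · rw [Fin.coe_sub_iff_lt.mpr h]
    omega

namespace SimpleGraph

variable {V : Type*} {G : SimpleGraph V}

lemma neighborSet_eq_pair_of_ncard_le_two [Finite V] {w a b : V}
    (hdeg : (G.neighborSet w).ncard ≤ 2) (ha : G.Adj w a) (hb : G.Adj w b) (hab : a ≠ b) :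
    G.neighborSet w = {a, b} :=
  (Set.eq_of_subset_of_ncard_le (Set.pair_subset ha hb) (by rwa [Set.ncard_pair hab])).symm

lemma two_le_ncard_neighborSet [Finite V] {w a b : V} (ha : G.Adj w a) (hb : G.Adj w b)
    (hab : a ≠ b) : 2 ≤ (G.neighborSet w).ncard :=
  Set.ncard_pair hab ▸ Set.ncard_le_ncard (Set.pair_subset ha hb)

lemma ncard_neighborSet_induce {s : Set V} {v : s} (h : G.neighborSet v ⊆ s) :
    ((G.induce s).neighborSet v).ncard = (G.neighborSet v).ncard := by
  rw [neighborSet_induce]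
  exact Set.ncard_preimage_of_injective_subset_range Subtype.val_injective (by simpa using h)

lemma exists_isPath_forall_length_le [Finite V] [Nonempty V] (G : SimpleGraph V) :
    ∃ (a b : V) (p : G.Walk a b), p.IsPath ∧
      ∀ (c d : V) (q : G.Walk c d), q.IsPath → q.length ≤ p.length := by
  classical
  have := Fintype.ofFinite V
  let P n := ∃ (a b : V) (p : G.Walk a b), p.IsPath ∧ p.length = n
  have hP0 : P 0 := ⟨Classical.arbitrary V, _, .nil, .nil, rfl⟩
  obtain ⟨a, b, p, hp, hlen⟩ := Nat.findGreatest_spec (Nat.zero_le (Fintype.card V)) hP0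
  exact ⟨a, b, p, hp, fun c d q hq =>
    hlen ▸ Nat.le_findGreatest hq.length_lt.le ⟨c, d, q, hq, rfl⟩⟩

namespace Walk

variable {a b : V} {p : G.Walk a b}

lemma IsPath.neighborSet_getVert [Finite V] (hdeg : ∀ w, (G.neighborSet w).ncard ≤ 2)
    (hp : p.IsPath) {i : ℕ} (hi0 : 0 < i) (hi : i < p.length) :
    G.neighborSet (p.getVert i) = {p.getVert (i - 1), p.getVert (i + 1)} := by
  refine neighborSet_eq_pair_of_ncard_le_two (hdeg _) ?_ (p.adj_getVert_succ hi) fun h => ?_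
  · simpa [Nat.sub_add_cancel hi0] using (p.adj_getVert_succ (i := i - 1) (by omega)).symm
  · have := hp.getVert_injOn (by simp; omega) (by simp; omega) h
    omega

lemma IsPath.adj_getVert_iff [Finite V] (hdeg : ∀ w, (G.neighborSet w).ncard ≤ 2)
    (hp : p.IsPath) {i j : ℕ} (hi : i ≤ p.length) (hj : j ≤ p.length) :
    G.Adj (p.getVert i) (p.getVert j) ↔ i + 1 = j ∨ j + 1 = i ∨
      (G.Adj a b ∧ (i = 0 ∧ j = p.length ∨ i = p.length ∧ j = 0)) := by
  have interior {i j : ℕ} (hi0 : 0 < i) (hi : i < p.length) (hj : j ≤ p.length)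
      (hadj : G.Adj (p.getVert i) (p.getVert j)) : i + 1 = j ∨ j + 1 = i := by
    have hmem : p.getVert j ∈ G.neighborSet (p.getVert i) := hadj
    rw [hp.neighborSet_getVert hdeg hi0 hi] at hmem
    rcases hmem with h | h
    · have := hp.getVert_injOn (by simp; omega) (by simp; omega) h
      omega
    · have := hp.getVert_injOn (by simp; omega) (by simp; omega) h
      omega
  constructor
  · intro hadj
    have hij : i ≠ j := by rintro rfl; exact hadj.ne rfl
    by_cases hi' : 0 < i ∧ i < p.length
    · have := interior hi'.1 hi'.2 hj hadj
      omega
    by_cases hj' : 0 < j ∧ j < p.length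
    · have := interior hj'.1 hj'.2 hi hadj.symm
      omega
    have hends : i = 0 ∧ j = p.length ∨ i = p.length ∧ j = 0 := by omega
    refine .inr (.inr ⟨?_, hends⟩)
    rcases hends with ⟨rfl, rfl⟩ | ⟨rfl, rfl⟩
    · simpa using hadj
    · simpa using hadj.symm
  · rintro (rfl | rfl | ⟨hab, ⟨rfl, rfl⟩ | ⟨rfl, rfl⟩⟩)
    · exact p.adj_getVert_succ (by omega)
    · exact (p.adj_getVert_succ (by omega)).symm
    · simpa using hab
    · simpa using hab.symm

lemma IsPath.mem_support_of_forall_length_le [Finite V] (hconn : G.Connected)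
    (hdeg : ∀ w, (G.neighborSet w).ncard ≤ 2) (hp : p.IsPath)
    (hmax : ∀ (c d : V) (q : G.Walk c d), q.IsPath → q.length ≤ p.length) (w : V) :
    w ∈ p.support := by
  by_contra hw
  obtain ⟨⟨⟨x, y⟩, hxy⟩, -, hx, hy⟩ :=
    (hconn a w).some.exists_boundary_dart {z | z ∈ p.support} p.start_mem_support hw
  simp only [Set.mem_ofPred_eq] at hx hy hxy
  obtain ⟨i, rfl, hi⟩ := mem_support_iff_exists_getVert.mp hx
  rcases Nat.eq_zero_or_pos i with rfl | hi0
  · have := hmax _ _ _ (hp.cons (h := by simpa using hxy.symm) hy)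
    simp at this
  rcases hi.lt_or_eq with hi' | rfl
  · have hmem : y ∈ G.neighborSet (p.getVert i) := hxy
    rw [hp.neighborSet_getVert hdeg hi0 hi'] at hmem
    rcases hmem with rfl | rfl <;> exact hy (p.getVert_mem_support _)
  · have := hmax _ _ _ (hp.concat hy (by simpa using hxy))
    simp at this

noncomputable def IsPath.getVertEquiv (hp : p.IsPath) (hspan : ∀ w, w ∈ p.support) :
    Fin (p.length + 1) ≃ V :=
  Equiv.ofBijective (fun i => p.getVert i)
    ⟨fun i j h => Fin.ext (hp.getVert_injOn (by simp; omega) (by simp; omega) h), fun w => by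
      obtain ⟨i, rfl, hi⟩ := mem_support_iff_exists_getVert.mp (hspan w)
      exact ⟨⟨i, by omega⟩, rfl⟩⟩

@[simp]
lemma IsPath.getVertEquiv_apply (hp : p.IsPath) (hspan : ∀ w, w ∈ p.support)
    (i : Fin (p.length + 1)) : hp.getVertEquiv hspan i = p.getVert i :=
  rfl

lemma IsPath.nonempty_iso_pathGraph [Finite V] (hdeg : ∀ w, (G.neighborSet w).ncard ≤ 2)
    (hp : p.IsPath) (hspan : ∀ w, w ∈ p.support) (hab : ¬ G.Adj a b) :
    Nonempty (G ≃g pathGraph (p.length + 1)) :=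
  ⟨.symm ⟨hp.getVertEquiv hspan, fun {i j} => by
    rw [getVertEquiv_apply, getVertEquiv_apply, pathGraph_adj,
      hp.adj_getVert_iff hdeg (Nat.lt_succ_iff.mp i.2) (Nat.lt_succ_iff.mp j.2)]
    simp [hab, eq_comm]⟩⟩

lemma IsPath.nonempty_iso_cycleGraph [Finite V] (hdeg : ∀ w, (G.neighborSet w).ncard ≤ 2)
    (hp : p.IsPath) (hspan : ∀ w, w ∈ p.support) (hab : G.Adj a b) :
    Nonempty (G ≃g cycleGraph (p.length + 1)) := by
  have hlen : 0 < p.length := Nat.pos_of_ne_zero fun h => hab.ne (p.eq_of_length_eq_zero h)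
  refine ⟨.symm ⟨hp.getVertEquiv hspan, fun {i j} => ?_⟩⟩
  rw [getVertEquiv_apply, getVertEquiv_apply, cycleGraph_adj', Fin.val_sub_eq_one_iff hlen,
    Fin.val_sub_eq_one_iff hlen,
    hp.adj_getVert_iff hdeg (Nat.lt_succ_iff.mp i.2) (Nat.lt_succ_iff.mp j.2)]
  simp only [hab, true_and]
  omega

end Walk

lemma Connected.nonempty_iso_pathGraph_or_cycleGraph [Finite V] (hconn : G.Connected)
    (hdeg : ∀ w, (G.neighborSet w).ncard ≤ 2) :
    (∃ n, Nonempty (G ≃g pathGraph n)) ∨ (∃ n, Nonempty (G ≃g cycleGraph n)) := by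
  have := hconn.nonempty
  obtain ⟨a, b, p, hp, hmax⟩ := G.exists_isPath_forall_length_le
  have hspan := hp.mem_support_of_forall_length_le hconn hdeg hmax
  by_cases hab : G.Adj a b
  · exact .inr ⟨_, hp.nonempty_iso_cycleGraph hdeg hspan hab⟩
  · exact .inl ⟨_, hp.nonempty_iso_pathGraph hdeg hspan hab⟩

lemma Reachable.exists_isPath_nearest (P : V → Prop) {x u : V} (hx : P x)
    (hxu : G.Reachable x u) :
    ∃ (y : V) (q : G.Walk y u), q.IsPath ∧ P y ∧
      ∀ (z : V) (r : G.Walk z u), r.length < q.length → ¬ P z := by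
  classical
  have hex : ∃ n, ∃ y, P y ∧ ∃ q : G.Walk y u, q.length = n :=
    ⟨_, x, hx, hxu.some, rfl⟩
  obtain ⟨y, hy, q, hq⟩ := Nat.find_spec hex
  refine ⟨y, q.bypass, q.bypass_isPath, hy, fun z r hr hz => ?_⟩
  have := Nat.find_min' hex ⟨z, hz, r, rfl⟩
  have := q.length_bypass_le_length
  omega

end SimpleGraph

open SimpleGraph

section Chain

variable {V : Type*} {G : SimpleGraph V}

lemma graphChain_of_adj [Finite V] {x x1 x2 x3 : V}
    (h01 : G.Adj x x1) (h12 : G.Adj x1 x2) (h23 : G.Adj x2 x3)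
    (h02 : x ≠ x2) (h13 : x1 ≠ x3) (h03 : x ≠ x3) (hx : 3 ≤ (G.neighborSet x).ncard)
    (hx1 : (G.neighborSet x1).ncard ≤ 2) (hx2 : (G.neighborSet x2).ncard ≤ 2) :
    GraphChain G x x1 x2 x3 :=
  ⟨h01, h12, h23, h03, hx, le_antisymm hx1 (two_le_ncard_neighborSet h01.symm h12 h02),
    le_antisymm hx2 (two_le_ncard_neighborSet h12.symm h23 h13)⟩

lemma GraphChain.mem_supp {x x1 x2 x3 : V} {c : G.ConnectedComponent}
    (h : GraphChain G x x1 x2 x3) (hx : x ∈ c.supp) :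
    x1 ∈ c.supp ∧ x2 ∈ c.supp ∧ x3 ∈ c.supp := by
  have hx1 := c.mem_supp_of_adj_mem_supp hx h.1
  have hx2 := c.mem_supp_of_adj_mem_supp hx1 h.2.1
  exact ⟨hx1, hx2, c.mem_supp_of_adj_mem_supp hx2 h.2.2.1⟩

lemma exists_graphChain_of_isPath_nearest [Finite V] {u v x : V} (hadj : G.Adj u v)
    (hcommon : G.neighborSet u ∩ G.neighborSet v = ∅)
    (hdu : (G.neighborSet u).ncard = 2) (hdv : (G.neighborSet v).ncard = 2)
    (q : G.Walk x u) (hq : q.IsPath) (hx : 3 ≤ (G.neighborSet x).ncard)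
    (hnear : ∀ (z : V) (r : G.Walk z u), r.length < q.length →
      ¬ 3 ≤ (G.neighborSet z).ncard) :
    ∃ x1 x2 x3, GraphChain G x x1 x2 x3 := by
  have hxu : x ≠ u := by rintro rfl; omega
  have hxv : x ≠ v := by rintro rfl; omega
  have hnot_common (y : V) (hyu : G.Adj y u) (hyv : G.Adj y v) : False :=
    Set.eq_empty_iff_forall_notMem.mp hcommon y ⟨hyu.symm, hyv.symm⟩
  rcases q with _ | ⟨h1, _ | ⟨h2, _ | ⟨h3, r⟩⟩⟩
  · exact absurd rfl hxu
  · obtain ⟨y, hy, hyu⟩ := (G.neighborSet v).exists_ne_of_one_lt_ncard (by omega) u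
    exact ⟨u, v, y, graphChain_of_adj h1 hadj hy hxv hyu.symm
      (by rintro rfl; exact hnot_common _ h1 hy.symm) hx hdu.le hdv.le⟩
  · rename_i w
    have hw : (G.neighborSet w).ncard ≤ 2 := by
      have := hnear w (.cons h2 .nil) (by simp)
      omega
    by_cases hwv : w = v
    · subst hwv
      obtain ⟨y, hy, hyw⟩ := (G.neighborSet u).exists_ne_of_one_lt_ncard (by omega) w
      exact ⟨w, u, y, graphChain_of_adj h1 h2 hy hxu hyw.symm
        (by rintro rfl; exact hnot_common _ hy.symm h1) hx hw hdu.le⟩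
    · exact ⟨w, u, v, graphChain_of_adj h1 h2 hadj hxu hwv hxv hx hw hdu.le⟩
  · have hy1 := hnear _ (.cons h2 (.cons h3 r)) (by simp)
    have hy2 := hnear _ (.cons h3 r) (by simp)
    simp only [Walk.cons_isPath_iff, Walk.support_cons, List.mem_cons, not_or] at hq
    obtain ⟨⟨-, -, hy1r⟩, -, hxy2, hxr⟩ := hq
    exact ⟨_, _, _, graphChain_of_adj h1 h2 h3 hxy2 (fun h => hy1r (h ▸ r.start_mem_support))
      (fun h => hxr (h ▸ r.start_mem_support)) hx (by omega) (by omega)⟩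

end Chain

/-- Claim 2: if `u, v` are adjacent vertices with no common neighbor and
`deg u = deg v = 2`, then either the connected component of `u` induces a
chordless path or a chordless cycle, or `G` contains a chain lying inside
the connected component of `u`. -/
theorem claim_chain {V : Type*} [Fintype V] (G : SimpleGraph V) (u v : V)
    (hadj : G.Adj u v)
    (hcommon : G.neighborSet u ∩ G.neighborSet v = ∅)
    (hdu : (G.neighborSet u).ncard = 2)
    (hdv : (G.neighborSet v).ncard = 2) :
    (∃ n : ℕ, Nonempty
      (G.induce (G.connectedComponentMk u).supp ≃g SimpleGraph.pathGraph n)) ∨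
    (∃ n : ℕ, Nonempty
      (G.induce (G.connectedComponentMk u).supp ≃g SimpleGraph.cycleGraph n)) ∨
    (∃ x x1 x2 x3 : V, GraphChain G x x1 x2 x3 ∧
      x ∈ (G.connectedComponentMk u).supp ∧ x1 ∈ (G.connectedComponentMk u).supp ∧
      x2 ∈ (G.connectedComponentMk u).supp ∧ x3 ∈ (G.connectedComponentMk u).supp) := by
  set C := G.connectedComponentMk u
  by_cases hdeg : ∃ x ∈ C.supp, 3 ≤ (G.neighborSet x).ncard
  · obtain ⟨x₀, hx₀C, hx₀⟩ := hdeg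
    obtain ⟨x, q, hq, hx, hnear⟩ :=
      (ConnectedComponent.exact hx₀C).exists_isPath_nearest
        (fun z => 3 ≤ (G.neighborSet z).ncard) hx₀
    obtain ⟨x1, x2, x3, hchain⟩ :=
      exists_graphChain_of_isPath_nearest hadj hcommon hdu hdv q hq hx hnear
    have hxC : x ∈ C.supp := ConnectedComponent.sound q.reachable
    exact .inr (.inr ⟨x, x1, x2, x3, hchain, hxC, hchain.mem_supp hxC⟩)
  push Not at hdeg
  refine (C.connected_toSimpleGraph.nonempty_iso_pathGraph_or_cycleGraph fun w => ?_).imp_right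
    .inl
  rw [ConnectedComponent.toSimpleGraph, ncard_neighborSet_induce
    fun _ => C.mem_supp_of_adj_mem_supp w.2]
  exact Nat.le_of_lt_succ (hdeg w w.2)
end

section
/- Let G be a finite simple graph with no dominating vertex (i.e., no vertex dominates another). Let v be a vertex of degree 4 with N(v) = {u₁, u₂, u₃, u₄}, such that the only edges among u₁, u₂, u₃, u₄ are u₁u₂ and u₃u₄, each uᵢ has exactly one neighbor u′ᵢ outside N[v], and u′₁, u′₂, u′₃, u′₄ are pairwise distinct. Then the graph G − v has no dominating vertex. -/
/-!
Suppose `a` dominates `b` in `G - v`. Since `a` does not dominate `b` in `G`, the only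
neighbour of `b` that escapes `N[a]` is `v`, so `b` is some `uᵢ` and `a ∉ N[v]`; hence `a` is
the outer neighbour `uᵢ'`. The partner `uⱼ` of `uᵢ` is a neighbour of `b` different from `v`
and from `a`, so it is adjacent to `a`, making `a` the outer neighbour `uⱼ'` as well,
against `uᵢ' ≠ uⱼ'`.
-/

/-- In a graph `H`, vertex `v` dominates vertex `u` if they are adjacent
and `N(u) ⊆ N[v]`. -/
def GDominates {V : Type*} (H : SimpleGraph V) (v u : V) : Prop :=
  H.Adj u v ∧ H.neighborSet u ⊆ insert v (H.neighborSet v)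

namespace SimpleGraph

variable {V : Type*} {G : SimpleGraph V}

lemma gDominates_induce_iff {s : Set V} {a b : s} :
    GDominates (G.induce s) a b ↔
      G.Adj b a ∧ G.neighborSet b ∩ s ⊆ insert (a : V) (G.neighborSet a) := by
  refine and_congr Iff.rfl ⟨fun h w ⟨hbw, hw⟩ => ?_, fun h w hbw => ?_⟩
  · rcases h (show (⟨w, hw⟩ : s) ∈ (G.induce s).neighborSet b from hbw) with rfl | haw
    · exact Set.mem_insert _ _
    · exact Set.mem_insert_of_mem _ haw
  · rcases h ⟨hbw, w.2⟩ with haw | haw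
    · exact Or.inl (Subtype.ext haw)
    · exact Or.inr haw

lemma neighborSet_subset_of_gDominates_induce_compl {v : V} {a b : ({v}ᶜ : Set V)}
    (h : GDominates (G.induce {v}ᶜ) a b) :
    G.neighborSet b ⊆ insert v (insert (a : V) (G.neighborSet a)) :=
  Set.sdiff_subset_iff.mp (gDominates_induce_iff.mp h).2

lemma adj_of_gDominates_induce_compl {v : V} {a b : ({v}ᶜ : Set V)}
    (hG : ¬ GDominates G a b) (h : GDominates (G.induce {v}ᶜ) a b) :
    G.Adj v b ∧ (a : V) ∉ insert v (G.neighborSet v) := by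
  obtain ⟨w, hbw, hwa⟩ := Set.not_subset.mp fun hb => hG ⟨h.1, hb⟩
  have hwv : w = v := by
    rcases neighborSet_subset_of_gDominates_induce_compl h hbw with hwv | hwa'
    · exact hwv
    · exact absurd hwa' hwa
  subst hwv
  refine ⟨hbw.symm, ?_⟩
  rintro (haw | hwa')
  · exact a.2 haw
  · exact hwa (Set.mem_insert_of_mem _ hwa'.symm)

lemma not_neighborSet_subset_of_outer_ne {v x y x' y' a : V} (hxy : G.Adj x y)
    (hvy : G.Adj v y)
    (hx' : G.neighborSet x \ insert v (G.neighborSet v) = {x'})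
    (hy' : G.neighborSet y \ insert v (G.neighborSet v) = {y'}) (hne : x' ≠ y')
    (ha : a ∉ insert v (G.neighborSet v)) (hxa : G.Adj x a) :
    ¬ G.neighborSet x ⊆ insert v (insert a (G.neighborSet a)) := by
  intro hsub
  have hax' : a = x' := by
    have h : a ∈ G.neighborSet x \ insert v (G.neighborSet v) := ⟨hxa, ha⟩
    rwa [hx'] at h
  have hyv : y ≠ v := fun h => G.irrefl (h ▸ hvy)
  have hya : y ≠ a := fun h => ha (Set.mem_insert_of_mem _ (h ▸ hvy))
  have hay : G.Adj a y := by
    rcases hsub hxy with h | h | h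
    · exact absurd h hyv
    · exact absurd h hya
    · exact h
  have hay' : a = y' := by
    have h : a ∈ G.neighborSet y \ insert v (G.neighborSet v) := ⟨hay.symm, ha⟩
    rwa [hy'] at h
  exact hne (hax' ▸ hay')

end SimpleGraph

open SimpleGraph in
theorem lemma_G_minus_v_no_dominating_general {V : Type*} (G : SimpleGraph V)
    (hnodom : ∀ a b : V, ¬ GDominates G a b)
    (v u1 u2 u3 u4 u1' u2' u3' u4' : V)
    (hNv : G.neighborSet v = {u1, u2, u3, u4})
    (h12 : G.Adj u1 u2) (h34 : G.Adj u3 u4)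
    (hout1 : G.neighborSet u1 \ insert v (G.neighborSet v) = {u1'})
    (hout2 : G.neighborSet u2 \ insert v (G.neighborSet v) = {u2'})
    (hout3 : G.neighborSet u3 \ insert v (G.neighborSet v) = {u3'})
    (hout4 : G.neighborSet u4 \ insert v (G.neighborSet v) = {u4'})
    (hdist : List.Pairwise (· ≠ ·) [u1', u2', u3', u4']) :
    ∀ a b : ({v}ᶜ : Set V), ¬ GDominates (G.induce ({v}ᶜ : Set V)) a b := by
  intro a b hdom
  obtain ⟨hvb, ha⟩ := adj_of_gDominates_induce_compl (hnodom a b) hdom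
  have hba : G.Adj b a := hdom.1
  have hsub := neighborSet_subset_of_gDominates_induce_compl hdom
  obtain ⟨hd12, hd34⟩ : u1' ≠ u2' ∧ u3' ≠ u4' := by grind [List.pairwise_cons]
  have hu : ∀ u ∈ ({u1, u2, u3, u4} : Set V), G.Adj v u := fun u hu => by rwa [← hNv] at hu
  have hb : (b : V) ∈ ({u1, u2, u3, u4} : Set V) := by rwa [← hNv]
  rcases hb with hb | hb | hb | hb <;> rw [hb] at hba hsub
  · exact not_neighborSet_subset_of_outer_ne h12 (hu u2 (by simp)) hout1 hout2 hd12 ha hba hsub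
  · exact not_neighborSet_subset_of_outer_ne h12.symm (hu u1 (by simp)) hout2 hout1 hd12.symm ha
      hba hsub
  · exact not_neighborSet_subset_of_outer_ne h34 (hu u4 (by simp)) hout3 hout4 hd34 ha hba hsub
  · exact not_neighborSet_subset_of_outer_ne h34.symm (hu u3 (by simp)) hout4 hout3 hd34.symm ha
      hba hsub

/-- Lemma 2: under the setup of the sub-steps of (S5), `G − v` has no
dominating vertex. -/
theorem lemma_G_minus_v_no_dominating {V : Type*} [Fintype V] (G : SimpleGraph V)
    (hnodom : ∀ a b : V, ¬ GDominates G a b)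
    (v u1 u2 u3 u4 u1' u2' u3' u4' : V)
    (hdv : (G.neighborSet v).ncard = 4)
    (hNv : G.neighborSet v = {u1, u2, u3, u4})
    (h12 : G.Adj u1 u2) (h34 : G.Adj u3 u4)
    (h13 : ¬ G.Adj u1 u3) (h14 : ¬ G.Adj u1 u4)
    (h23 : ¬ G.Adj u2 u3) (h24 : ¬ G.Adj u2 u4)
    (hout1 : G.neighborSet u1 \ insert v (G.neighborSet v) = {u1'})
    (hout2 : G.neighborSet u2 \ insert v (G.neighborSet v) = {u2'})
    (hout3 : G.neighborSet u3 \ insert v (G.neighborSet v) = {u3'})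
    (hout4 : G.neighborSet u4 \ insert v (G.neighborSet v) = {u4'})
    (hdist : List.Pairwise (· ≠ ·) [u1', u2', u3', u4']) :
    ∀ a b : ({v}ᶜ : Set V), ¬ GDominates (G.induce ({v}ᶜ : Set V)) a b :=
  lemma_G_minus_v_no_dominating_general G hnodom v u1 u2 u3 u4 u1' u2' u3' u4' hNv h12 h34 hout1
    hout2 hout3 hout4 hdist
end

section
/- Let G be a finite simple graph and let X be a set of vertices such that the induced subgraph G[X] contains no path on 3 vertices. If C is a 3-path vertex cover of the graph G − N[X], then C ∪ N(X) is a 3-path vertex cover of G. -/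
/-!
A 3-path avoiding `N[X]` is covered by `C`; a 3-path meeting `N[X]` is covered by `N[X]`.
Removing `X` from this cover keeps it a cover: a 3-path that is only covered by vertices of `X`
would, since every neighbour of `X` outside `X` stays in the cover, lie entirely inside `X`,
which `G[X]` forbids.
-/

/-- `S` is a 3-path vertex cover of `H`: every path on 3 vertices contains a
vertex of `S`. -/
def IsPVC3 {V : Type*} (H : SimpleGraph V) (S : Set V) : Prop :=
  ∀ a b c : V, H.Adj a b → H.Adj b c → a ≠ c → a ∈ S ∨ b ∈ S ∨ c ∈ S

namespace IsPVC3

variable {V : Type*} {G : SimpleGraph V}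

theorem mono {S T : Set V} (hST : S ⊆ T) (hS : IsPVC3 G S) : IsPVC3 G T := by
  intro a b c hab hbc hac
  rcases hS a b c hab hbc hac with h | h | h
  exacts [Or.inl (hST h), Or.inr (Or.inl (hST h)), Or.inr (Or.inr (hST h))]

theorem image_val_union_of_induce_compl {M : Set V} {C : Set (Mᶜ : Set V)}
    (hC : IsPVC3 (G.induce Mᶜ) C) : IsPVC3 G (Subtype.val '' C ∪ M) := by
  intro a b c hab hbc hac
  by_contra h
  simp only [Set.mem_union, not_or] at h
  obtain ⟨⟨haC, haM⟩, ⟨hbC, hbM⟩, ⟨hcC, hcM⟩⟩ := h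
  have hac' : (⟨a, haM⟩ : (Mᶜ : Set V)) ≠ ⟨c, hcM⟩ := fun h => hac (congrArg Subtype.val h)
  rcases hC ⟨a, haM⟩ ⟨b, hbM⟩ ⟨c, hcM⟩ hab hbc hac' with h | h | h
  exacts [haC ⟨_, h, rfl⟩, hbC ⟨_, h, rfl⟩, hcC ⟨_, h, rfl⟩]

theorem sdiff_of_adj_mem {S X : Set V} (hS : IsPVC3 G S)
    (hX : ∀ a b c : V, a ∈ X → b ∈ X → c ∈ X → G.Adj a b → G.Adj b c → a = c)
    (hN : ∀ x y : V, x ∈ X → G.Adj x y → y ∉ X → y ∈ S) : IsPVC3 G (S \ X) := by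
  intro a b c hab hbc hac
  by_contra h
  simp only [Set.mem_sdiff, not_or, not_and, not_not] at h
  obtain ⟨ha, hb, hc⟩ := h
  have hmemX : ∀ y, (y ∈ S → y ∈ X) → ∀ x ∈ X, G.Adj x y → y ∈ X :=
    fun y hy x hx hxy => by_contra fun hyX => hyX (hy (hN x y hx hxy hyX))
  have hbX : b ∈ X := by
    rcases hS a b c hab hbc hac with h | h | h
    exacts [hmemX b hb a (ha h) hab, hb h, hmemX b hb c (hc h) hbc.symm]
  exact hac (hX a b c (hmemX a ha b hbX hab.symm) hbX (hmemX c hc b hbX hbc) hab hbc)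

end IsPVC3

theorem pvc3_extend_general {V : Type*} (G : SimpleGraph V) (X : Set V)
    (hX : ∀ a b c : V, a ∈ X → b ∈ X → c ∈ X →
      G.Adj a b → G.Adj b c → a = c)
    (C : Set ((⋃ v ∈ X, insert v (G.neighborSet v) : Set V)ᶜ : Set V))
    (hC : IsPVC3 (G.induce ((⋃ v ∈ X, insert v (G.neighborSet v) : Set V)ᶜ : Set V)) C) :
    IsPVC3 G ((Subtype.val '' C) ∪
      ((⋃ v ∈ X, insert v (G.neighborSet v) : Set V) \ X)) := by
  have hcover := hC.image_val_union_of_induce_compl.sdiff_of_adj_mem hX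
    fun x y hx hxy _ => Or.inr (Set.mem_biUnion hx (Set.mem_insert_of_mem _ hxy))
  refine hcover.mono ?_
  rw [Set.union_sdiff_distrib]
  exact Set.union_subset_union_left _ Set.sdiff_subset

/-- If the induced subgraph `G[X]` contains no path on 3 vertices and `C` is a
3-path vertex cover of `G − N[X]`, then `C ∪ N(X)` is a 3-path vertex cover
of `G`. -/
theorem pvc3_extend {V : Type*} [Fintype V] (G : SimpleGraph V) (X : Set V)
    (hX : ∀ a b c : V, a ∈ X → b ∈ X → c ∈ X →
      G.Adj a b → G.Adj b c → a = c)
    (C : Set ((⋃ v ∈ X, insert v (G.neighborSet v) : Set V)ᶜ : Set V))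
    (hC : IsPVC3 (G.induce ((⋃ v ∈ X, insert v (G.neighborSet v) : Set V)ᶜ : Set V)) C) :
    IsPVC3 G ((Subtype.val '' C) ∪
      ((⋃ v ∈ X, insert v (G.neighborSet v) : Set V) \ X)) :=
  pvc3_extend_general G X hX C hC
end

section
/- Let G be a finite simple graph containing four distinct vertices a, b, c, d that induce a chordless 4-cycle with edges ab, bc, cd, da (and no other edges among them), such that N(a) = {b, d} and N(c) = {b, d} (so a and c have no neighbors outside the cycle). Then there exists a minimum-size 3-path vertex cover S of G with b ∈ S, d ∈ S, a ∉ S, and c ∉ S. -/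
theorem Set.ncard_diff_union_le {α : Type*} {T X R : Set α} (hT : T.Finite)
    (hR : R.ncard ≤ (T ∩ X).ncard) : (T \ X ∪ R).ncard ≤ T.ncard := by
  have := Set.ncard_inter_add_ncard_sdiff_eq_ncard T X hT
  have := Set.ncard_union_le (T \ X) R
  omega

namespace IsPVC3

variable {V : Type*} {G : SimpleGraph V}

theorem univ : IsPVC3 G Set.univ := fun _ _ _ _ _ _ => Or.inl trivial

theorem exists_minimal [Finite V] :
    ∃ T : Set V, IsPVC3 G T ∧ ∀ U : Set V, IsPVC3 G U → T.ncard ≤ U.ncard :=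
  Set.exists_min_image {T : Set V | IsPVC3 G T} Set.ncard (Set.toFinite _) ⟨_, univ⟩

theorem diff_union {T X R : Set V} (hT : IsPVC3 G T)
    (hR : ∀ x ∈ X \ R, G.neighborSet x ⊆ R) : IsPVC3 G (T \ X ∪ R) := by
  intro x y z hxy hyz hxz
  by_contra! hS
  obtain ⟨hx, hy, hz⟩ := hS
  have outside : ∀ u v, u ∉ T \ X ∪ R → v ∉ T \ X ∪ R → G.Adj u v → u ∉ X :=
    fun u v hu hv huv huX => hv (Or.inr (hR u ⟨huX, fun huR => hu (Or.inr huR)⟩ huv))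
  rcases hT x y z hxy hyz hxz with h | h | h
  · exact hx (Or.inl ⟨h, outside x y hx hy hxy⟩)
  · exact hy (Or.inl ⟨h, outside y x hy hx hxy.symm⟩)
  · exact hz (Or.inl ⟨h, outside z y hz hy hyz.symm⟩)

theorem two_le_ncard_inter_cycle4 {T : Set V} (hT : IsPVC3 G T) {a b c d : V}
    (hac : a ≠ c) (hbd : b ≠ d)
    (eab : G.Adj a b) (ebc : G.Adj b c) (ecd : G.Adj c d) (eda : G.Adj d a) :
    2 ≤ (T ∩ {a, b, c, d}).ncard := by
  suffices ∃ u v, u ∈ T ∩ {a, b, c, d} ∧ v ∈ T ∩ {a, b, c, d} ∧ u ≠ v from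
    (Set.one_lt_ncard_iff ((Set.toFinite _).subset Set.inter_subset_right)).mpr this
  by_cases haT : a ∈ T
  · rcases hT b c d ebc ecd hbd with h | h | h
    · exact ⟨a, b, ⟨haT, by simp⟩, ⟨h, by simp⟩, eab.ne⟩
    · exact ⟨a, c, ⟨haT, by simp⟩, ⟨h, by simp⟩, hac⟩
    · exact ⟨a, d, ⟨haT, by simp⟩, ⟨h, by simp⟩, eda.ne.symm⟩
  by_cases hcT : c ∈ T
  · rcases hT d a b eda eab hbd.symm with h | h | h
    · exact ⟨c, d, ⟨hcT, by simp⟩, ⟨h, by simp⟩, ecd.ne⟩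
    · exact absurd h haT
    · exact ⟨c, b, ⟨hcT, by simp⟩, ⟨h, by simp⟩, ebc.ne.symm⟩
  have hbT : b ∈ T := by simpa [haT, hcT] using hT a b c eab ebc hac
  have hdT : d ∈ T := by simpa [haT, hcT] using hT c d a ecd eda hac.symm
  exact ⟨b, d, ⟨hbT, by simp⟩, ⟨hdT, by simp⟩, hbd⟩

theorem exists_ncard_le_containing_diagonal [Finite V] {T : Set V} (hT : IsPVC3 G T)
    {a b c d : V} (hac : a ≠ c) (hbd : b ≠ d)
    (hNa : G.neighborSet a = {b, d}) (hNc : G.neighborSet c = {b, d}) :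
    ∃ S : Set V, IsPVC3 G S ∧ S.ncard ≤ T.ncard ∧ b ∈ S ∧ d ∈ S ∧ a ∉ S ∧ c ∉ S := by
  have adj_a : ∀ v, G.Adj a v ↔ v = b ∨ v = d := by simpa [Set.ext_iff] using hNa
  have adj_c : ∀ v, G.Adj c v ↔ v = b ∨ v = d := by simpa [Set.ext_iff] using hNc
  have eab : G.Adj a b := (adj_a b).mpr (Or.inl rfl)
  have ead : G.Adj a d := (adj_a d).mpr (Or.inr rfl)
  have ecb : G.Adj c b := (adj_c b).mpr (Or.inl rfl)
  have ecd : G.Adj c d := (adj_c d).mpr (Or.inr rfl)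
  refine ⟨T \ {a, b, c, d} ∪ {b, d}, hT.diff_union ?_, Set.ncard_diff_union_le T.toFinite ?_,
    by simp, by simp, by simp [eab.ne, ead.ne], by simp [ecb.ne, ecd.ne]⟩
  · rintro x ⟨hxX, hxR⟩
    rcases hxX with rfl | rfl | rfl | rfl
    · exact hNa.le
    · exact absurd (Or.inl rfl) hxR
    · exact hNc.le
    · exact absurd (Or.inr rfl) hxR
  · rw [Set.ncard_pair hbd]
    exact hT.two_le_ncard_inter_cycle4 hac hbd eab ecb.symm ecd ead.symm

end IsPVC3

theorem cycle4_min_pvc3_general {V : Type*} [Fintype V] (G : SimpleGraph V)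
    (a b c d : V)
    (hac : a ≠ c) (hbd : b ≠ d)
    (hNa : G.neighborSet a = {b, d})
    (hNc : G.neighborSet c = {b, d}) :
    ∃ S : Set V, IsPVC3 G S ∧ (∀ T : Set V, IsPVC3 G T → S.ncard ≤ T.ncard) ∧
      b ∈ S ∧ d ∈ S ∧ a ∉ S ∧ c ∉ S := by
  obtain ⟨T, hT, hmin⟩ := IsPVC3.exists_minimal (G := G)
  obtain ⟨S, hS, hST, hbS, hdS, haS, hcS⟩ :=
    hT.exists_ncard_le_containing_diagonal hac hbd hNa hNc
  exact ⟨S, hS, fun U hU => hST.trans (hmin U hU), hbS, hdS, haS, hcS⟩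

/-- If `a, b, c, d` induce a chordless 4-cycle with edges `ab, bc, cd, da` and
`a, c` have no neighbors outside the cycle (`N(a) = N(c) = {b, d}`), then some
minimum 3-path vertex cover contains `b, d` and avoids `a, c`. -/
theorem cycle4_min_pvc3 {V : Type*} [Fintype V] (G : SimpleGraph V)
    (a b c d : V)
    (hab : a ≠ b) (hac : a ≠ c) (had : a ≠ d)
    (hbc : b ≠ c) (hbd : b ≠ d) (hcd : c ≠ d)
    (eab : G.Adj a b) (ebc : G.Adj b c) (ecd : G.Adj c d) (eda : G.Adj d a)
    (nac : ¬ G.Adj a c) (nbd : ¬ G.Adj b d)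
    (hNa : G.neighborSet a = {b, d})
    (hNc : G.neighborSet c = {b, d}) :
    ∃ S : Set V, IsPVC3 G S ∧ (∀ T : Set V, IsPVC3 G T → S.ncard ≤ T.ncard) ∧
      b ∈ S ∧ d ∈ S ∧ a ∉ S ∧ c ∉ S :=
  cycle4_min_pvc3_general G a b c d hac hbd hNa hNc
end

section
/- Let G be a finite simple graph, let v be a vertex with deg(v) = 1, let u be the unique neighbor of v, and suppose deg(u) = 2 with w the neighbor of u other than v. Then there exists a minimum-size 3-path vertex cover S of G with w ∈ S, u ∉ S, and v ∉ S. -/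
theorem Set.ncard_insert_sdiff_le {α : Type*} {s t : Set α} {w : α} (ht : t.Finite)
    (hmeet : (t ∩ insert w s).Nonempty) : (insert w (t \ s)).ncard ≤ t.ncard := by
  by_cases hw : w ∈ t
  · exact Set.ncard_le_ncard (Set.insert_subset hw Set.sdiff_subset) ht
  obtain ⟨x, hxt, hxs⟩ := hmeet
  have hxs : x ∈ s := hxs.resolve_left (by rintro rfl; exact hw hxt)
  calc (insert w (t \ s)).ncard
      ≤ (insert w (t \ {x})).ncard :=
        Set.ncard_le_ncard (Set.insert_subset_insert (Set.sdiff_subset_sdiff_right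
          (Set.singleton_subset_iff.2 hxs))) (ht.sdiff.insert w)
    _ ≤ (t \ {x}).ncard + 1 := Set.ncard_insert_le _ _
    _ = t.ncard := Set.ncard_sdiff_singleton_add_one hxt ht

namespace SimpleGraph

variable {V : Type*} {G : SimpleGraph V} {u v w : V}

theorem eq_or_eq_or_eq_of_adj_adj_of_pendant (hNv : G.neighborSet v ⊆ {u})
    (hNu : G.neighborSet u ⊆ {v, w}) {a b c : V} (hab : G.Adj a b) (hbc : G.Adj b c)
    (hac : a ≠ c) (hmeet : a ∈ ({u, v} : Set V) ∨ b ∈ ({u, v} : Set V) ∨ c ∈ ({u, v} : Set V)) :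
    a = w ∨ b = w ∨ c = w := by
  have hv : ∀ x, G.Adj v x → x = u := fun x hx => hNv hx
  have hu : ∀ x, G.Adj u x → x = v ∨ x = w := fun x hx => hNu hx
  simp only [Set.mem_insert_iff, Set.mem_singleton_iff] at hmeet
  grind [Adj.symm]

end SimpleGraph

namespace IsPVC3

variable {V : Type*} {G : SimpleGraph V}

theorem exists_min_ncard [Finite V] (G : SimpleGraph V) :
    ∃ T, IsPVC3 G T ∧ ∀ T', IsPVC3 G T' → T.ncard ≤ T'.ncard :=
  Set.exists_min_image {T | IsPVC3 G T} Set.ncard (Set.toFinite _) ⟨Set.univ, univ⟩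

theorem insert_sdiff_of_pendant {T : Set V} {u v w : V} (hT : IsPVC3 G T)
    (hNv : G.neighborSet v ⊆ {u}) (hNu : G.neighborSet u ⊆ {v, w}) :
    IsPVC3 G (insert w (T \ {u, v})) := by
  intro a b c hab hbc hac
  by_cases hmeet : a ∈ ({u, v} : Set V) ∨ b ∈ ({u, v} : Set V) ∨ c ∈ ({u, v} : Set V)
  · rcases G.eq_or_eq_or_eq_of_adj_adj_of_pendant hNv hNu hab hbc hac hmeet with h | h | h <;>
      simp [h]
  · simp only [not_or] at hmeet
    rcases hT a b c hab hbc hac with h | h | h <;> simp [h, hmeet]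

end IsPVC3

theorem rule_S2_correct_general {V : Type*} [Fintype V] (G : SimpleGraph V) (v u w : V)
    (hNv : G.neighborSet v = {u})
    (hNu : G.neighborSet u = {v, w})
    (hwv : w ≠ v) :
    ∃ S : Set V, IsPVC3 G S ∧ (∀ T : Set V, IsPVC3 G T → S.ncard ≤ T.ncard) ∧
      w ∈ S ∧ u ∉ S ∧ v ∉ S := by
  obtain ⟨T, hT, hmin⟩ := IsPVC3.exists_min_ncard G
  have hvu : G.Adj v u := by simp [← SimpleGraph.mem_neighborSet, hNv]
  have huw : G.Adj u w := by simp [← SimpleGraph.mem_neighborSet, hNu]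
  have hmeet : (T ∩ insert w {u, v}).Nonempty := by
    rcases hT v u w hvu huw hwv.symm with h | h | h
    exacts [⟨v, h, by simp⟩, ⟨u, h, by simp⟩, ⟨w, h, by simp⟩]
  refine ⟨insert w (T \ {u, v}), hT.insert_sdiff_of_pendant hNv.subset hNu.subset,
    fun T' hT' => (Set.ncard_insert_sdiff_le T.toFinite hmeet).trans (hmin T' hT'), by simp, ?_, ?_⟩
  · simp [huw.ne]
  · simp [hwv.symm]

/-- Correctness of rule (S2): if `deg v = 1` with unique neighbor `u`, and
`deg u = 2` with `w` the neighbor of `u` other than `v`, then there is a minimum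
3-path vertex cover `S` with `w ∈ S`, `u ∉ S` and `v ∉ S`. -/
theorem rule_S2_correct {V : Type*} [Fintype V] (G : SimpleGraph V) (v u w : V)
    (hdv : (G.neighborSet v).ncard = 1)
    (hNv : G.neighborSet v = {u})
    (hdu : (G.neighborSet u).ncard = 2)
    (hNu : G.neighborSet u = {v, w})
    (hwv : w ≠ v) :
    ∃ S : Set V, IsPVC3 G S ∧ (∀ T : Set V, IsPVC3 G T → S.ncard ≤ T.ncard) ∧
      w ∈ S ∧ u ∉ S ∧ v ∉ S :=
  rule_S2_correct_general G v u w hNv hNu hwv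
end
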